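/- arXiv:2601.01538 — 3 statements merged into one kernel-verified Lean document; each statement's English description precedes it below -/
import Mathlib

section
/- If β : ℝ≥0 × ℝ≥0 → ℝ≥0 is normalized (β(y,0) = y) and time-invariant (β is continuous, and whenever β(y,t₀) = β(z,0), one has β(y,t₀+t) = β(z,t) for all t ≥ 0), then for every fixed t ≥ 0 the map y ↦ β(y,t) is monotonically nondecreasing. -/
/-- If `β` is normalized and time-invariant, then `y ↦ β y t` is nondecreasing for each `t ≥ 0`. -/
theorem beta_monotone_of_normalized_timeInvariant
    (β : ℝ → ℝ → ℝ)
    (hβpos : ∀ y t, 0 ≤ y → 0 ≤ t → 0 ≤ β y t)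
    (hnorm : ∀ y, 0 ≤ y → β y 0 = y)
    (hcont : ContinuousOn (fun p : ℝ × ℝ => β p.1 p.2) {p | 0 ≤ p.1 ∧ 0 ≤ p.2})
    (hTI : ∀ y z t₀, 0 ≤ y → 0 ≤ z → 0 ≤ t₀ → β y t₀ = β z 0 →
      ∀ t, 0 ≤ t → β y (t₀ + t) = β z t) :
    ∀ t, 0 ≤ t → ∀ y₁ y₂, 0 ≤ y₁ → y₁ ≤ y₂ → β y₁ t ≤ β y₂ t := by
  intro t ht y₁ y₂ hy₁ h12
  have hy₂ : 0 ≤ y₂ := hy₁.trans h12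
  by_contra hlt
  push_neg at hlt
  -- continuity of s ↦ β yᵢ s on [0, t]
  have hc : ∀ y : ℝ, 0 ≤ y → ContinuousOn (fun s => β y s) (Set.Icc 0 t) := by
    intro y hy
    have : ContinuousOn (fun s : ℝ => (y, s)) (Set.Icc 0 t) :=
      (continuous_const.prodMk continuous_id).continuousOn
    refine (hcont.comp this ?_)
    intro s hs
    exact ⟨hy, hs.1⟩
  have hf : ContinuousOn (fun s => β y₁ s - β y₂ s) (Set.Icc 0 t) :=
    (hc y₁ hy₁).sub (hc y₂ hy₂)
  have h0 : β y₁ 0 - β y₂ 0 ≤ 0 := by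
    rw [hnorm y₁ hy₁, hnorm y₂ hy₂]; linarith
  have ht0 : 0 ≤ β y₁ t - β y₂ t := by linarith
  obtain ⟨s, hs, hfs⟩ := intermediate_value_Icc ht hf ⟨h0, ht0⟩
  have hz : 0 ≤ β y₁ s := hβpos y₁ s hy₁ hs.1
  have hfs' : β y₁ s - β y₂ s = 0 := hfs
  have heq : β y₂ s = β y₁ s := by linarith
  have h1 : β y₁ (s + (t - s)) = β (β y₁ s) (t - s) :=
    hTI y₁ (β y₁ s) s hy₁ hz hs.1 (by rw [hnorm _ hz]) (t - s) (by linarith [hs.2])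
  have h2 : β y₂ (s + (t - s)) = β (β y₁ s) (t - s) :=
    hTI y₂ (β y₁ s) s hy₂ hz hs.1 (by rw [hnorm _ hz, heq]) (t - s) (by linarith [hs.2])
  have : β y₁ t = β y₂ t := by
    have e : s + (t - s) = t := by ring
    rw [e] at h1 h2
    rw [h1, h2]
  linarith
end

section
/- Let β : ℝ≥0 × ℝ≥0 → ℝ≥0 be differentiable in its second argument, normalized, and time-invariant. Then β satisfies the scalar differential equation ∂ₜβ(y,t) = ρ(β(y,t)) with β(y,0) = y for all y,t ≥ 0, where ρ(y) := ∂ₜβ(y,t)|_{t=0}. -/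
/-!
Time invariance, applied with `z = β(y,t)`, gives the semigroup law `β(y, t + s) = β(β(y,t), s)`
for `s ≥ 0`. Differentiating in `s` at `s = 0` yields `∂ₜβ(y,t) = ρ(β(y,t))`; the law only holds
for `s ≥ 0`, but a one-sided derivative of a differentiable function is its derivative.
-/

open Set

lemma deriv_eq_of_eqOn_Ici {F : Type*} [NormedAddCommGroup F] [NormedSpace ℝ F] {f g : ℝ → F}
    {a : ℝ} (hf : DifferentiableAt ℝ f a) (hg : DifferentiableAt ℝ g a) (hfg : EqOn f g (Ici a)) :
    deriv f a = deriv g a := by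
  have hU : UniqueDiffWithinAt ℝ (Ici a) a := uniqueDiffOn_Ici a a self_mem_Ici
  rw [← hf.derivWithin hU, ← hg.derivWithin hU, derivWithin_congr hfg (hfg self_mem_Ici)]

lemma semigroup_of_timeInvariant {β : ℝ → ℝ → ℝ}
    (hβpos : ∀ y t, 0 ≤ y → 0 ≤ t → 0 ≤ β y t)
    (hnorm : ∀ y, 0 ≤ y → β y 0 = y)
    (hTI : ∀ y z t₀, 0 ≤ y → 0 ≤ z → 0 ≤ t₀ → β y t₀ = β z 0 →
      ∀ t, 0 ≤ t → β y (t₀ + t) = β z t)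
    {y t s : ℝ} (hy : 0 ≤ y) (ht : 0 ≤ t) (hs : 0 ≤ s) :
    β y (t + s) = β (β y t) s :=
  have hz := hβpos y t hy ht
  hTI y (β y t) t hy hz ht (hnorm _ hz).symm s hs

theorem normalized_timeInvariant_satisfies_ODE_general
    (β : ℝ → ℝ → ℝ) (ρ : ℝ → ℝ)
    (hβpos : ∀ y t, 0 ≤ y → 0 ≤ t → 0 ≤ β y t)
    (hdiff : ∀ y t, 0 ≤ y → 0 ≤ t → DifferentiableAt ℝ (fun s => β y s) t)
    (hnorm : ∀ y, 0 ≤ y → β y 0 = y)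
    (hTI : ∀ y z t₀, 0 ≤ y → 0 ≤ z → 0 ≤ t₀ → β y t₀ = β z 0 →
      ∀ t, 0 ≤ t → β y (t₀ + t) = β z t)
    (hρ : ∀ y, 0 ≤ y → ρ y = deriv (fun s => β y s) 0) :
    ∀ y t, 0 ≤ y → 0 ≤ t →
      deriv (fun s => β y s) t = ρ (β y t) ∧ β y 0 = y := by
  intro y t hy ht
  have hz : 0 ≤ β y t := hβpos y t hy ht
  have hshift : DifferentiableAt ℝ (fun s => β y (t + s)) 0 := by
    rw [differentiableAt_comp_add_left, add_zero]
    exact hdiff y t hy ht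
  refine ⟨?_, hnorm y hy⟩
  calc deriv (fun s => β y s) t
      = deriv (fun s => β y (t + s)) 0 := by rw [deriv_comp_const_add, add_zero]
    _ = deriv (fun s => β (β y t) s) 0 :=
        deriv_eq_of_eqOn_Ici hshift (hdiff _ 0 hz le_rfl)
          fun s hs => semigroup_of_timeInvariant hβpos hnorm hTI hy ht hs
    _ = ρ (β y t) := (hρ _ hz).symm

/-- A differentiable, normalized, time-invariant `β` satisfies the scalar ODE
`∂ₜβ(y,t) = ρ(β(y,t))` with `β(y,0) = y`, where `ρ(y) := ∂ₜβ(y,t)|_{t=0}`. -/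
theorem normalized_timeInvariant_satisfies_ODE
    (β : ℝ → ℝ → ℝ) (ρ : ℝ → ℝ)
    (hβpos : ∀ y t, 0 ≤ y → 0 ≤ t → 0 ≤ β y t)
    (hdiff : ∀ y t, 0 ≤ y → 0 ≤ t → DifferentiableAt ℝ (fun s => β y s) t)
    (hnorm : ∀ y, 0 ≤ y → β y 0 = y)
    (hcont : ContinuousOn (fun p : ℝ × ℝ => β p.1 p.2) {p | 0 ≤ p.1 ∧ 0 ≤ p.2})
    (hTI : ∀ y z t₀, 0 ≤ y → 0 ≤ z → 0 ≤ t₀ → β y t₀ = β z 0 →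
      ∀ t, 0 ≤ t → β y (t₀ + t) = β z t)
    (hρ : ∀ y, 0 ≤ y → ρ y = deriv (fun s => β y s) 0) :
    ∀ y t, 0 ≤ y → 0 ≤ t →
      deriv (fun s => β y s) t = ρ (β y t) ∧ β y 0 = y :=
  normalized_timeInvariant_satisfies_ODE_general β ρ hβpos hdiff hnorm hTI hρ
end

section
/- Converse Lyapunov construction: Let G ⊆ ℝⁿ be forward invariant for f, let α₁, α₂ : G → ℝ≥0, and let β be normalized and time-invariant. If α₁(φ_f(x,t)) ≤ β(α₂(x),t) for all x ∈ G and t ≥ 0, then the function V(x) := inf { y ∈ ℝ≥0 : α₁(φ_f(x,t)) ≤ β(y,t) for all t ≥ 0 } is well-defined and satisfies α₁(x) ≤ V(x) ≤ α₂(x) for all x ∈ G, and V(φ_f(x,t)) ≤ β(V(x),t) for all x ∈ G and t ≥ 0. -/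
/-- Converse Lyapunov construction: under `β`-stability, the function
`V(x) = inf {y ≥ 0 | ∀ t ≥ 0, α₁(φ(x,t)) ≤ β(y,t)}` is well-defined and satisfies
`α₁ ≤ V ≤ α₂` together with `V(φ(x,t)) ≤ β(V(x),t)`. -/
theorem converse_lyapunov_construction {n : ℕ}
    (G : Set (EuclideanSpace ℝ (Fin n)))
    (φ : EuclideanSpace ℝ (Fin n) → ℝ → EuclideanSpace ℝ (Fin n))
    (hφ0 : ∀ x, φ x 0 = x)
    (hφsg : ∀ x t s, 0 ≤ t → 0 ≤ s → φ (φ x t) s = φ x (t + s))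
    (hinv : ∀ x ∈ G, ∀ t, 0 ≤ t → φ x t ∈ G)
    (α₁ α₂ : EuclideanSpace ℝ (Fin n) → ℝ)
    (hα₁pos : ∀ x ∈ G, 0 ≤ α₁ x) (hα₂pos : ∀ x ∈ G, 0 ≤ α₂ x)
    (β : ℝ → ℝ → ℝ)
    (hβpos : ∀ y t, 0 ≤ y → 0 ≤ t → 0 ≤ β y t)
    (hnorm : ∀ y, 0 ≤ y → β y 0 = y)
    (hβcont : ContinuousOn (fun p : ℝ × ℝ => β p.1 p.2) {p | 0 ≤ p.1 ∧ 0 ≤ p.2})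
    (hTI : ∀ y z t₀, 0 ≤ y → 0 ≤ z → 0 ≤ t₀ → β y t₀ = β z 0 →
      ∀ t, 0 ≤ t → β y (t₀ + t) = β z t)
    (hstab : ∀ x ∈ G, ∀ t, 0 ≤ t → α₁ (φ x t) ≤ β (α₂ x) t)
    (W : EuclideanSpace ℝ (Fin n) → Set ℝ)
    (hW : ∀ x, W x = {y : ℝ | 0 ≤ y ∧ ∀ t, 0 ≤ t → α₁ (φ x t) ≤ β y t})
    (V : EuclideanSpace ℝ (Fin n) → ℝ)
    (hV : ∀ x, V x = sInf (W x)) :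
    ∀ x ∈ G,
      (W x).Nonempty ∧
      α₁ x ≤ V x ∧ V x ≤ α₂ x ∧
      (∀ t, 0 ≤ t → V (φ x t) ≤ β (V x) t) := by
  -- key: for any x, W x is closed, so if nonempty its infimum belongs to it
  have hWclosed : ∀ x, IsClosed (W x) := by
    intro x
    rw [hW x]
    have : {y : ℝ | 0 ≤ y ∧ ∀ t, 0 ≤ t → α₁ (φ x t) ≤ β y t}
        = ⋂ t : {t : ℝ // 0 ≤ t},
            (Set.Ici 0 ∩ (fun y => β y t.1) ⁻¹' Set.Ici (α₁ (φ x t.1))) := by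
      ext y
      simp only [Set.mem_setOf_eq, Set.mem_iInter, Set.mem_inter_iff, Set.mem_Ici,
        Set.mem_preimage, Subtype.forall]
      constructor
      · rintro ⟨hy, h⟩ t ht; exact ⟨hy, h t ht⟩
      · intro h
        exact ⟨(h 0 le_rfl).1, fun t ht => (h t ht).2⟩
    rw [this]
    refine isClosed_iInter fun t => ?_
    have hc : ContinuousOn (fun y => β y t.1) (Set.Ici 0) := by
      have : ContinuousOn ((fun p : ℝ × ℝ => β p.1 p.2) ∘ fun y => (y, t.1))
          (Set.Ici 0) := by
        refine hβcont.comp (by fun_prop) ?_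
        intro y hy
        exact ⟨hy, t.2⟩
      exact this
    exact hc.preimage_isClosed_of_isClosed isClosed_Ici isClosed_Ici
  intro x hx
  have hmemα₂ : α₂ x ∈ W x := by
    rw [hW x]
    exact ⟨hα₂pos x hx, fun t ht => hstab x hx t ht⟩
  have hne : (W x).Nonempty := ⟨_, hmemα₂⟩
  have hbdd : BddBelow (W x) := by
    refine ⟨0, fun y hy => ?_⟩
    rw [hW x] at hy; exact hy.1
  have hVmem : V x ∈ W x := by
    rw [hV x]; exact (hWclosed x).csInf_mem hne hbdd
  rw [hW x] at hVmem
  obtain ⟨hV0, hVall⟩ := hVmem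
  have hα₁V : α₁ x ≤ V x := by
    have := hVall 0 le_rfl
    rwa [hφ0, hnorm _ hV0] at this
  have hVα₂ : V x ≤ α₂ x := by
    rw [hV x]; exact csInf_le hbdd hmemα₂
  refine ⟨hne, hα₁V, hVα₂, fun t ht => ?_⟩
  -- β (V x) t ∈ W (φ x t)
  have hz0 : 0 ≤ β (V x) t := hβpos _ _ hV0 ht
  have hTI' : ∀ s, 0 ≤ s → β (V x) (t + s) = β (β (V x) t) s :=
    hTI (V x) (β (V x) t) t hV0 hz0 ht (hnorm _ hz0).symm
  have hmem : β (V x) t ∈ W (φ x t) := by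
    rw [hW]
    refine ⟨hz0, fun s hs => ?_⟩
    rw [hφsg x t s ht hs, ← hTI' s hs]
    exact hVall (t + s) (by linarith)
  have hbdd' : BddBelow (W (φ x t)) := by
    refine ⟨0, fun y hy => ?_⟩
    rw [hW] at hy; exact hy.1
  rw [hV]
  exact csInf_le hbdd' hmem
end
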